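/- Let W = (w_{ij}) ∈ ℝ^{n×n} be a nonnegative, symmetric, doubly stochastic matrix with eigenvalues 1 = λ₁ > λ₂ ≥ ⋯ ≥ λ_n and ρ := max{|λ₂|, |λ_n|} < 1. Let t_1, …, t_n, d_1, …, d_n, d_1⁺, …, d_n⁺ ∈ ℝ^d and define the gradient-tracking update t_i⁺ := Σ_{j=1}^n w_{ij} t_j + d_i⁺ − d_i, with averages t̄ := (1/n)Σ_i t_i and t̄⁺ := (1/n)Σ_i t_i⁺. Then Σ_{i=1}^n ‖t_i⁺ − t̄⁺‖² ≤ ρ Σ_{i=1}^n ‖t_i − t̄‖² + (1/(1 − ρ)) Σ_{i=1}^n ‖d_i⁺ − d_i‖². -/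

import Mathlib

/-!
Write `xᵢ = tᵢ - t̄` and `eᵢ = dᵢ⁺ - dᵢ`. Row and column sums one give
`tᵢ⁺ - t̄⁺ = ∑ⱼ wᵢⱼ xⱼ + (eᵢ - ē)`. Each coordinate of `x` sums to zero, and since
`Pᵀ 𝟏` is supported on the only coordinate whose eigenvalue may be `1`, the coordinates of `x`
in the eigenbasis vanish there; hence `W` shrinks `∑ ‖xᵢ‖²` by `ρ²`. Centering does not increase
`∑ ‖eᵢ‖²`, and the triangle inequality in `ℓ²` together with convexity of `s ↦ s²` splits
`(ρ a + b)²` into `ρ a² + b² / (1 - ρ)`.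
-/

open Matrix Finset

section Spectral

variable {ι : Type*} [Fintype ι] [DecidableEq ι]

lemma dotProduct_mulVec_mulVec_of_transpose_mul_self {Q : Matrix ι ι ℝ} (hQ : Qᵀ * Q = 1)
    (v w : ι → ℝ) : (Q *ᵥ v) ⬝ᵥ (Q *ᵥ w) = v ⬝ᵥ w := by
  rw [dotProduct_mulVec, ← mulVec_transpose, mulVec_mulVec, hQ, one_mulVec]

variable {W P : Matrix ι ι ℝ} {lam : ι → ℝ}

lemma transpose_mulVec_mulVec_of_eq_diagonal (hP : P * Pᵀ = 1)
    (hW : W = P * diagonal lam * Pᵀ) (v : ι → ℝ) :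
    Pᵀ *ᵥ (W *ᵥ v) = diagonal lam *ᵥ (Pᵀ *ᵥ v) := by
  rw [mulVec_mulVec, mulVec_mulVec, hW, ← Matrix.mul_assoc, ← Matrix.mul_assoc,
    mul_eq_one_comm.mp hP, Matrix.one_mul]

lemma transpose_mulVec_one_eq_zero (hP : P * Pᵀ = 1) (hW : W = P * diagonal lam * Pᵀ)
    (hrows : ∀ i, ∑ j, W i j = 1) {k : ι} (hk : lam k ≠ 1) : (Pᵀ *ᵥ 1) k = 0 := by
  have hW1 : W *ᵥ 1 = 1 := funext fun i => by simp [mulVec, dotProduct, hrows i]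
  have h := congrFun (transpose_mulVec_mulVec_of_eq_diagonal hP hW 1) k
  rw [hW1, mulVec_diagonal] at h
  have : (lam k - 1) * (Pᵀ *ᵥ 1) k = 0 := by linarith
  exact (mul_eq_zero.mp this).resolve_left (sub_ne_zero.mpr hk)

lemma transpose_mulVec_eq_zero_of_sum_eq_zero (hP : P * Pᵀ = 1)
    (hW : W = P * diagonal lam * Pᵀ) (hrows : ∀ i, ∑ j, W i j = 1) {k₀ : ι}
    (hlam : ∀ k ≠ k₀, lam k ≠ 1) {y : ι → ℝ} (hy : ∑ i, y i = 0) : (Pᵀ *ᵥ y) k₀ = 0 := by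
  have hQ : Pᵀᵀ * Pᵀ = 1 := by rwa [transpose_transpose]
  have hdot (v : ι → ℝ) : (Pᵀ *ᵥ 1) ⬝ᵥ (Pᵀ *ᵥ v) = (Pᵀ *ᵥ 1) k₀ * (Pᵀ *ᵥ v) k₀ :=
    Fintype.sum_eq_single k₀ fun k hk => by
      simp [transpose_mulVec_one_eq_zero hP hW hrows (hlam k hk)]
  have hone : (Pᵀ *ᵥ 1) k₀ * (Pᵀ *ᵥ 1) k₀ = Fintype.card ι := by
    rw [← hdot, dotProduct_mulVec_mulVec_of_transpose_mul_self hQ, one_dotProduct]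
    simp
  have hcard : (Fintype.card ι : ℝ) ≠ 0 :=
    Nat.cast_ne_zero.mpr (Fintype.card_pos_iff.mpr ⟨k₀⟩).ne'
  have hy' : (Pᵀ *ᵥ 1) k₀ * (Pᵀ *ᵥ y) k₀ = 0 := by
    rw [← hdot, dotProduct_mulVec_mulVec_of_transpose_mul_self hQ, one_dotProduct, hy]
  exact (mul_eq_zero.mp hy').resolve_left fun h => hcard (by rw [← hone, h, zero_mul])

lemma sum_mulVec_sq_le (hP : P * Pᵀ = 1) (hW : W = P * diagonal lam * Pᵀ)
    (hrows : ∀ i, ∑ j, W i j = 1) {k₀ : ι} {ρ : ℝ} (hlam : ∀ k ≠ k₀, |lam k| ≤ ρ)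
    (hρ : ρ < 1) {y : ι → ℝ} (hy : ∑ i, y i = 0) :
    ∑ i, (W *ᵥ y) i ^ 2 ≤ ρ ^ 2 * ∑ i, y i ^ 2 := by
  have hz : (Pᵀ *ᵥ y) k₀ = 0 := transpose_mulVec_eq_zero_of_sum_eq_zero hP hW hrows
    (fun k hk h => by linarith [le_abs_self (lam k), hlam k hk]) hy
  have hWy : W *ᵥ y = P *ᵥ (diagonal lam *ᵥ (Pᵀ *ᵥ y)) := by
    rw [mulVec_mulVec, mulVec_mulVec, hW]
  have hsq (v : ι → ℝ) : ∑ i, v i ^ 2 = v ⬝ᵥ v := by simp [dotProduct, sq]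
  have hPP : Pᵀ * P = 1 := mul_eq_one_comm.mp hP
  have hQ : Pᵀᵀ * Pᵀ = 1 := by rwa [transpose_transpose]
  rw [hsq, hsq, hWy, dotProduct_mulVec_mulVec_of_transpose_mul_self hPP,
    ← dotProduct_mulVec_mulVec_of_transpose_mul_self hQ y y, ← hsq, ← hsq, mul_sum]
  refine sum_le_sum fun k _ => ?_
  rw [mulVec_diagonal, mul_pow]
  by_cases hk : k = k₀
  · simp [hk, hz]
  · have := abs_le.mp (hlam k hk)
    exact mul_le_mul_of_nonneg_right (sq_le_sq' this.1 this.2) (sq_nonneg _)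

lemma sum_norm_sq_sum_smul_le {κ : Type*} [Fintype κ] (hP : P * Pᵀ = 1)
    (hW : W = P * diagonal lam * Pᵀ) (hrows : ∀ i, ∑ j, W i j = 1) {k₀ : ι} {ρ : ℝ}
    (hlam : ∀ k ≠ k₀, |lam k| ≤ ρ) (hρ : ρ < 1) {y : ι → EuclideanSpace ℝ κ} (hy : ∑ i, y i = 0) :
    ∑ i, ‖∑ j, W i j • y j‖ ^ 2 ≤ ρ ^ 2 * ∑ i, ‖y i‖ ^ 2 := by
  have hcoord (i : ι) (c : κ) : (∑ j, W i j • y j) c = (W *ᵥ fun j => y j c) i := by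
    simp [mulVec, dotProduct, WithLp.ofLp_sum]
  simp_rw [EuclideanSpace.real_norm_sq_eq, hcoord]
  rw [sum_comm, sum_comm (f := fun i c => y i c ^ 2), mul_sum]
  refine sum_le_sum fun c _ => sum_mulVec_sq_le hP hW hrows hlam hρ ?_
  simpa [WithLp.ofLp_sum] using congrArg (fun v : EuclideanSpace ℝ κ => v c) hy

end Spectral

section Mean

variable {ι E : Type*} [Fintype ι]

noncomputable def mean [AddCommGroup E] [Module ℝ E] (x : ι → E) : E :=
  (Fintype.card ι : ℝ)⁻¹ • ∑ i, x i

lemma mean_fin [AddCommGroup E] [Module ℝ E] {n : ℕ} (x : Fin n → E) :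
    mean x = (n : ℝ)⁻¹ • ∑ i, x i := by
  rw [mean, Fintype.card_fin]

lemma sum_eq_card_smul_mean [AddCommGroup E] [Module ℝ E] (x : ι → E) :
    ∑ i, x i = (Fintype.card ι : ℝ) • mean x := by
  rcases isEmpty_or_nonempty ι with hι | hι
  · simp
  · rw [mean, smul_smul, mul_inv_cancel₀ (Nat.cast_ne_zero.mpr Fintype.card_ne_zero), one_smul]

lemma sum_sub_mean [AddCommGroup E] [Module ℝ E] (x : ι → E) : ∑ i, (x i - mean x) = 0 := by
  rw [sum_sub_distrib, sum_const, card_univ, ← Nat.cast_smul_eq_nsmul ℝ,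
    ← sum_eq_card_smul_mean, sub_self]

lemma mean_add [AddCommGroup E] [Module ℝ E] (x y : ι → E) :
    mean (fun i => x i + y i) = mean x + mean y := by
  simp only [mean, sum_add_distrib, smul_add]

lemma mean_sum_smul [AddCommGroup E] [Module ℝ E] {W : Matrix ι ι ℝ}
    (hcols : ∀ j, ∑ i, W i j = 1) (x : ι → E) :
    mean (fun i => ∑ j, W i j • x j) = mean x := by
  rw [mean, sum_comm]
  simp_rw [← sum_smul, hcols, one_smul, mean]

lemma sum_norm_sub_mean_sq_le [NormedAddCommGroup E] [InnerProductSpace ℝ E] (x : ι → E) :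
    ∑ i, ‖x i - mean x‖ ^ 2 ≤ ∑ i, ‖x i‖ ^ 2 := by
  simp_rw [norm_sub_sq_real]
  rw [sum_add_distrib, sum_sub_distrib, ← mul_sum, ← sum_inner, sum_eq_card_smul_mean x,
    real_inner_smul_left, real_inner_self_eq_norm_sq, sum_const, card_univ, nsmul_eq_mul]
  have : 0 ≤ (Fintype.card ι : ℝ) * ‖mean x‖ ^ 2 := by positivity
  linarith

end Mean

lemma mul_add_sq_le {ρ : ℝ} (hρ0 : 0 ≤ ρ) (hρ1 : ρ < 1) (a b : ℝ) :
    (ρ * a + b) ^ 2 ≤ ρ * a ^ 2 + 1 / (1 - ρ) * b ^ 2 := by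
  have h1ρ : 0 < 1 - ρ := by linarith
  rw [div_mul_eq_mul_div, one_mul, ← sub_nonneg]
  have key : ρ * a ^ 2 + b ^ 2 / (1 - ρ) - (ρ * a + b) ^ 2
      = ρ * ((1 - ρ) * a - b) ^ 2 / (1 - ρ) := by
    field_simp
    ring
  rw [key]
  positivity

lemma sum_norm_add_sq_le {ι E : Type*} [Fintype ι] [SeminormedAddCommGroup E]
    {ρ A B : ℝ} (hρ0 : 0 ≤ ρ) (hρ1 : ρ < 1) (hA : 0 ≤ A) {u v : ι → E}
    (hu : ∑ i, ‖u i‖ ^ 2 ≤ ρ ^ 2 * A) (hv : ∑ i, ‖v i‖ ^ 2 ≤ B) :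
    ∑ i, ‖u i + v i‖ ^ 2 ≤ ρ * A + 1 / (1 - ρ) * B := by
  have hnorm (x : ι → E) : ‖WithLp.toLp 2 x‖ ^ 2 = ∑ i, ‖x i‖ ^ 2 :=
    PiLp.norm_sq_eq_of_L2 (fun _ => E) (WithLp.toLp 2 x)
  have hB : 0 ≤ B := (sum_nonneg fun i _ => sq_nonneg ‖v i‖).trans hv
  have hu' : ‖WithLp.toLp 2 u‖ ≤ ρ * √A := by
    rw [← Real.sqrt_sq hρ0, ← Real.sqrt_mul (sq_nonneg ρ),
      Real.le_sqrt (norm_nonneg _) (by positivity), hnorm]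
    exact hu
  have hv' : ‖WithLp.toLp 2 v‖ ≤ √B := by
    rw [Real.le_sqrt (norm_nonneg _) hB, hnorm]
    exact hv
  calc ∑ i, ‖u i + v i‖ ^ 2 = ‖WithLp.toLp 2 u + WithLp.toLp 2 v‖ ^ 2 := by
        rw [← WithLp.toLp_add, hnorm]
        rfl
    _ ≤ (ρ * √A + √B) ^ 2 := by
      gcongr
      exact (norm_add_le _ _).trans (add_le_add hu' hv')
    _ ≤ ρ * √A ^ 2 + 1 / (1 - ρ) * √B ^ 2 := mul_add_sq_le hρ0 hρ1 _ _
    _ = ρ * A + 1 / (1 - ρ) * B := by rw [Real.sq_sqrt hA, Real.sq_sqrt hB]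

lemma sum_smul_add_sub_mean {ι E : Type*} [Fintype ι] [AddCommGroup E] [Module ℝ E]
    {W : Matrix ι ι ℝ} (hrows : ∀ i, ∑ j, W i j = 1) (hcols : ∀ j, ∑ i, W i j = 1)
    (t e : ι → E) (i : ι) :
    (∑ j, W i j • t j + e i) - mean (fun l => ∑ j, W l j • t j + e l)
      = ∑ j, W i j • (t j - mean t) + (e i - mean e) := by
  simp_rw [mean_add, mean_sum_smul hcols, smul_sub, sum_sub_distrib, ← sum_smul, hrows, one_smul]
  abel

/-- Consensus-error bound for the gradient-tracking update:
with `W` nonnegative, symmetric, doubly stochastic with spectral parameter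
`ρ = max{|λ₂|, |λₙ|} < 1`, and `tᵢ⁺ = ∑ⱼ w_{ij} tⱼ + dᵢ⁺ − dᵢ`, we have
`∑ ‖tᵢ⁺ − t̄⁺‖² ≤ ρ ∑ ‖tᵢ − t̄‖² + (1/(1−ρ)) ∑ ‖dᵢ⁺ − dᵢ‖²`. -/
theorem consensus_error_tracking_update {n m : ℕ} (hn : 2 ≤ n)
    (W : Matrix (Fin n) (Fin n) ℝ)
    (hW_rows : ∀ i, ∑ j, W i j = 1)
    (hW_cols : ∀ j, ∑ i, W i j = 1)
    (lam : Fin n → ℝ) (P : Matrix (Fin n) (Fin n) ℝ)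
    (hP : P * Pᵀ = 1)
    (hdiag : W = P * Matrix.diagonal lam * Pᵀ)
    (hmono : Antitone lam)
    (ρ : ℝ)
    (hρdef : ρ = max |lam ⟨1, by omega⟩| |lam ⟨n - 1, by omega⟩|)
    (hρlt : ρ < 1)
    (t d dplus : Fin n → EuclideanSpace ℝ (Fin m))
    (tplus : Fin n → EuclideanSpace ℝ (Fin m))
    (htplus : ∀ i, tplus i = (∑ j, W i j • t j) + dplus i - d i) :
    ∑ i, ‖tplus i - (n : ℝ)⁻¹ • ∑ l, tplus l‖ ^ 2
      ≤ ρ * ∑ i, ‖t i - (n : ℝ)⁻¹ • ∑ l, t l‖ ^ 2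
        + 1 / (1 - ρ) * ∑ i, ‖dplus i - d i‖ ^ 2 := by
  have hρ0 : 0 ≤ ρ := hρdef ▸ (abs_nonneg _).trans (le_max_left _ _)
  have hlam : ∀ k ≠ (⟨0, by omega⟩ : Fin n), |lam k| ≤ ρ := fun k hk => by
    have hk1 : 1 ≤ k.val := Nat.one_le_iff_ne_zero.mpr fun h => hk (Fin.ext h)
    rw [hρdef, max_comm]
    exact abs_le_max_abs_abs (hmono (Fin.le_def.mpr (by simp only; omega)))
      (hmono (Fin.le_def.mpr hk1))
  have htplus' : tplus = fun i => ∑ j, W i j • t j + (dplus i - d i) :=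
    funext fun i => (htplus i).trans (add_sub_assoc _ _ _)
  subst htplus'
  simp only [← mean_fin, sum_smul_add_sub_mean hW_rows hW_cols t (fun i => dplus i - d i)]
  exact sum_norm_add_sq_le hρ0 hρlt (by positivity)
    (sum_norm_sq_sum_smul_le hP hdiag hW_rows hlam hρlt (sum_sub_mean t))
    (sum_norm_sub_mean_sq_le _)
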